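/- arXiv:2202.07753 — 2 statements merged into one kernel-verified Lean document; each statement's English description precedes it below -/
import Mathlib

section
/- Under assumptions (A1) and (A2), suppose for each (x,μ) that π(·;x,μ) is an invariant probability measure of L_{x,μ} having finite moments of every order, uniformly bounded in (x,μ). Let h : ℝ^d×ℝ^d×P₂(ℝ^d) → ℝ be jointly continuous, and suppose h, f, a satisfy |g(x,y,μ) − g(x',y',μ)| ≤ K(1 ∧ |y−y'|^θ + |x−x'|)(1+|y|^m+|y'|^m) for g ∈ {h, f, a} and all x,x',y,y',μ, with h growing at most polynomially in y uniformly in (x,μ). Suppose moreover that for each (x,μ) there is v(x,·,μ) ∈ C²(ℝ^d) with v, ∇_y v, ∇²_y v bounded by K(1+|y|^q) uniformly in (x,μ) and L_{x,μ}v(x,y,μ) = h(x,y,μ) − h̄(x,μ) for all y, where h̄(x,μ) = ∫ h(x,y,μ) π(dy;x,μ). Then there is a constant C' (depending only on the constants in the above hypotheses) such that |h̄(x,μ)| ≤ C' for all (x,μ) and |h̄(x₁,μ) − h̄(x₂,μ)| ≤ C'|x₁ − x₂| for all x₁, x₂ ∈ ℝ^d and all μ ∈ P₂(ℝ^d); that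 is, the averaged coefficient h̄ is bounded and Lipschitz continuous in x uniformly in μ. -/
open MeasureTheory

noncomputable section

/-- First partial derivative of `φ : ℝ^d → ℝ` in the `i`-th coordinate direction. -/
def pd1 {d : ℕ} (φ : (Fin d → ℝ) → ℝ) (y : Fin d → ℝ) (i : Fin d) : ℝ :=
  fderiv ℝ φ y (Pi.single i 1)

/-- Second partial derivative of `φ : ℝ^d → ℝ` in the coordinate directions `i, j`. -/
def pd2 {d : ℕ} (φ : (Fin d → ℝ) → ℝ) (y : Fin d → ℝ) (i j : Fin d) : ℝ :=
  fderiv ℝ (fun z => fderiv ℝ φ z (Pi.single j 1)) y (Pi.single i 1)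

/-- The frozen generator `L φ (y) = f(y)·∇φ(y) + a(y):∇²φ(y)`. -/
def genL {d : ℕ} (f : (Fin d → ℝ) → Fin d → ℝ) (a : (Fin d → ℝ) → Fin d → Fin d → ℝ)
    (φ : (Fin d → ℝ) → ℝ) (y : Fin d → ℝ) : ℝ :=
  (∑ i, f y i * pd1 φ y i) + ∑ i, ∑ j, a y i j * pd2 φ y i j

/-- `C_b²` functions: twice continuously differentiable, bounded together with the
first and second derivatives. -/
def CbTwo {d : ℕ} (φ : (Fin d → ℝ) → ℝ) : Prop :=
  ContDiff ℝ 2 φ ∧ ∃ K : ℝ, ∀ y, |φ y| ≤ K ∧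
    ‖iteratedFDeriv ℝ 1 φ y‖ ≤ K ∧ ‖iteratedFDeriv ℝ 2 φ y‖ ≤ K

/-- An invariant probability measure of the frozen generator:
`∫ L φ dπ = 0` for every `φ ∈ C_b²`. -/
def IsInvariantMeasure {d : ℕ} (f : (Fin d → ℝ) → Fin d → ℝ)
    (a : (Fin d → ℝ) → Fin d → Fin d → ℝ) (π : Measure (Fin d → ℝ)) : Prop :=
  IsProbabilityMeasure π ∧
    ∀ φ : (Fin d → ℝ) → ℝ, CbTwo φ → ∫ y, genL f a φ y ∂π = 0

/-- `P₂(ℝ^d)`: Borel probability measures on `ℝ^d` with finite second moment.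
Its elements enter only as parameters. -/
def ProbMeas2 (d : ℕ) : Type :=
  {μ : Measure (Fin d → ℝ) // IsProbabilityMeasure μ ∧ Integrable (fun y => ‖y‖ ^ 2) μ}

/-- Assumption (A1): uniform ellipticity and boundedness of the symmetric diffusion
matrix `a`, two bounded `y`-derivatives, and uniform Hölder continuity in `y` of `a`
and these derivatives.  The parameter `p` ranges over the frozen data `(x, μ)`. -/
def AssumptionA1 {d : ℕ} {I : Type*} (a : I → (Fin d → ℝ) → Fin d → Fin d → ℝ) : Prop :=
  (∀ p y i j, a p y i j = a p y j i) ∧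
  (∃ lm lp : ℝ, 0 < lm ∧ lm ≤ lp ∧ ∀ p y (ξ : Fin d → ℝ),
      lm * ∑ i, ξ i ^ 2 ≤ 2 * ∑ i, ∑ j, ξ i * a p y i j * ξ j ∧
      2 * ∑ i, ∑ j, ξ i * a p y i j * ξ j ≤ lp * ∑ i, ξ i ^ 2) ∧
  (∃ K : ℝ, ∀ p y i j, |a p y i j| ≤ K) ∧
  (∀ p i j, ContDiff ℝ 2 (fun y => a p y i j)) ∧
  (∃ K : ℝ, ∀ p y i j,
      ‖iteratedFDeriv ℝ 1 (fun z => a p z i j) y‖ ≤ K ∧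
      ‖iteratedFDeriv ℝ 2 (fun z => a p z i j) y‖ ≤ K) ∧
  (∃ K θ : ℝ, 0 < θ ∧ θ ≤ 1 ∧ ∀ p y y' i j,
      |a p y i j - a p y' i j| ≤ K * ‖y - y'‖ ^ θ ∧
      ‖iteratedFDeriv ℝ 1 (fun z => a p z i j) y -
        iteratedFDeriv ℝ 1 (fun z => a p z i j) y'‖ ≤ K * ‖y - y'‖ ^ θ ∧
      ‖iteratedFDeriv ℝ 2 (fun z => a p z i j) y -
        iteratedFDeriv ℝ 2 (fun z => a p z i j) y'‖ ≤ K * ‖y - y'‖ ^ θ)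

/-- Assumption (A2): dissipativity and linear growth of the drift `f`, two bounded
`y`-derivatives, and uniform Hölder continuity in `y` of `f` and these derivatives.
The parameter `p` ranges over the frozen data `(x, μ)`. -/
def AssumptionA2 {d : ℕ} {I : Type*} (f : I → (Fin d → ℝ) → Fin d → ℝ) : Prop :=
  (∃ β C : ℝ, 0 < β ∧ 0 < C ∧ ∀ p y,
      (∑ i, f p y i * y i) ≤ -β * (∑ i, y i ^ 2) + C) ∧
  (∃ C : ℝ, ∀ p y, ‖f p y‖ ≤ C * (1 + ‖y‖)) ∧
  (∀ p i, ContDiff ℝ 2 (fun y => f p y i)) ∧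
  (∃ K : ℝ, ∀ p y i,
      ‖iteratedFDeriv ℝ 1 (fun z => f p z i) y‖ ≤ K ∧
      ‖iteratedFDeriv ℝ 2 (fun z => f p z i) y‖ ≤ K) ∧
  (∃ K θ : ℝ, 0 < θ ∧ θ ≤ 1 ∧ ∀ p y y' i,
      |f p y i - f p y' i| ≤ K * ‖y - y'‖ ^ θ ∧
      ‖iteratedFDeriv ℝ 1 (fun z => f p z i) y -
        iteratedFDeriv ℝ 1 (fun z => f p z i) y'‖ ≤ K * ‖y - y'‖ ^ θ ∧
      ‖iteratedFDeriv ℝ 2 (fun z => f p z i) y -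
        iteratedFDeriv ℝ 2 (fun z => f p z i) y'‖ ≤ K * ‖y - y'‖ ^ θ)

/-- Polynomial growth in `y`, uniformly in the parameters `(x, μ)`. -/
def PolyY {d : ℕ} {M : Type*} (g : (Fin d → ℝ) → (Fin d → ℝ) → M → ℝ) : Prop :=
  ∃ K : ℝ, ∃ m : ℕ, ∀ x y μ, |g x y μ| ≤ K * (1 + ‖y‖ ^ m)

/-- The mixed local Hölder / Lipschitz condition
`|g(x,y,μ) − g(x',y',μ)| ≤ K (1 ∧ |y−y'|^θ + |x−x'|)(1+|y|^m+|y'|^m)`. -/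
def MixedHolder {d : ℕ} {M : Type*} (g : (Fin d → ℝ) → (Fin d → ℝ) → M → ℝ) : Prop :=
  ∃ K θ : ℝ, ∃ m : ℕ, 0 < θ ∧ θ ≤ 1 ∧ ∀ x x' y y' μ,
    |g x y μ - g x' y' μ| ≤
      K * (min 1 (‖y - y'‖ ^ θ) + ‖x - x'‖) * (1 + ‖y‖ ^ m + ‖y'‖ ^ m)


/-!
Boundedness of `h̄` is the polynomial bound on `h` integrated against the uniformly bounded
moments of `π`. For the Lipschitz bound split
`h̄(x₁) - h̄(x₂) = ∫ (h(x₁,·) - h(x₂,·)) dπ(x₁) + (∫ h(x₂,·) dπ(x₁) - h̄(x₂))`.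
The first term is `O(|x₁ - x₂|)` because `h` is Lipschitz in `x` with a polynomial weight in `y`.
For the second, the Poisson equation at `x₂` turns it into `∫ L_{x₂} v(x₂,·) dπ(x₁)`, which equals
`∫ (L_{x₂} - L_{x₁}) v(x₂,·) dπ(x₁)` because `π(x₁)` annihilates `L_{x₁} v(x₂,·)`: invariance
extends from `C_b²` to the polynomially growing `v` by truncating with rescaled bumps and dominated
convergence. The coefficients of `L_{x₂} - L_{x₁}` are `O(|x₁ - x₂|)` with polynomial weights, and
the moments of `π(x₁)` are bounded uniformly.
-/

open Filter Topology

section Weight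

variable {t : ℝ}

theorem pow_le_one_add_pow (ht : 0 ≤ t) {p r : ℕ} (hpr : p ≤ r) : t ^ p ≤ 1 + t ^ r := by
  rcases le_or_gt t 1 with h | h
  · exact (pow_le_one₀ ht h).trans (le_add_of_nonneg_right (pow_nonneg ht _))
  · exact (pow_le_pow_right₀ h.le hpr).trans (le_add_of_nonneg_left zero_le_one)

theorem one_add_pow_le_two_mul_one_add_pow (ht : 0 ≤ t) {p r : ℕ} (hpr : p ≤ r) :
    1 + t ^ p ≤ 2 * (1 + t ^ r) := by
  linarith [pow_le_one_add_pow ht hpr, pow_nonneg ht r]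

theorem one_add_pow_mul_one_add_pow_le (ht : 0 ≤ t) (p q : ℕ) :
    (1 + t ^ p) * (1 + t ^ q) ≤ 3 * (1 + t ^ (p + q)) := by
  have hp := pow_le_one_add_pow ht (Nat.le_add_right p q)
  have hq := pow_le_one_add_pow ht (Nat.le_add_left q p)
  nlinarith [pow_add t p q, pow_nonneg ht (p + q)]

theorem nonneg_of_abs_le_mul_one_add_pow {E : Type*} [NormedAddCommGroup E] {g : E → ℝ}
    {K : ℝ} {m : ℕ} (hg : ∀ y, |g y| ≤ K * (1 + ‖y‖ ^ m)) : 0 ≤ K :=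
  nonneg_of_mul_nonneg_left ((abs_nonneg _).trans (hg 0)) (by positivity)

end Weight

section Moments

variable {E : Type*} [NormedAddCommGroup E] [MeasurableSpace E] {π : Measure E} {g : E → ℝ}
  {K M : ℝ} {m : ℕ}

theorem integrable_mul_one_add_pow [IsFiniteMeasure π] (hmom : Integrable (fun y => ‖y‖ ^ m) π)
    (K : ℝ) : Integrable (fun y => K * (1 + ‖y‖ ^ m)) π :=
  ((integrable_const 1).add hmom).const_mul K

theorem integrable_of_abs_le_mul_one_add_pow [IsFiniteMeasure π]
    (hmom : Integrable (fun y => ‖y‖ ^ m) π) (hgm : AEStronglyMeasurable g π)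
    (hg : ∀ y, |g y| ≤ K * (1 + ‖y‖ ^ m)) : Integrable g π :=
  (integrable_mul_one_add_pow hmom K).mono' hgm (.of_forall hg)

theorem abs_integral_le_of_abs_le_mul_one_add_pow [IsProbabilityMeasure π]
    (hmom : Integrable (fun y => ‖y‖ ^ m) π) (hM : ∫ y, ‖y‖ ^ m ∂π ≤ M)
    (hg : ∀ y, |g y| ≤ K * (1 + ‖y‖ ^ m)) : |∫ y, g y ∂π| ≤ K * (1 + M) :=
  calc |∫ y, g y ∂π| ≤ ∫ y, K * (1 + ‖y‖ ^ m) ∂π :=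
        norm_integral_le_of_norm_le (f := g) (integrable_mul_one_add_pow hmom K) (.of_forall hg)
    _ = K * (1 + ∫ y, ‖y‖ ^ m ∂π) := by
        rw [integral_const_mul, integral_add (integrable_const 1) hmom, integral_const]; simp
    _ ≤ K * (1 + M) := by gcongr; exact nonneg_of_abs_le_mul_one_add_pow hg

end Moments

section Generator

variable {d : ℕ} {f : (Fin d → ℝ) → Fin d → ℝ} {a : (Fin d → ℝ) → Fin d → Fin d → ℝ}
  {φ ψ : (Fin d → ℝ) → ℝ} {y : Fin d → ℝ}

theorem abs_pd1_le_norm_iteratedFDeriv (φ : (Fin d → ℝ) → ℝ) (y : Fin d → ℝ) (i : Fin d) :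
    |pd1 φ y i| ≤ ‖iteratedFDeriv ℝ 1 φ y‖ := by
  have h := (iteratedFDeriv ℝ 1 φ y).le_opNorm ![Pi.single i 1]
  rw [iteratedFDeriv_one_apply] at h
  simpa [pd1, Pi.norm_single] using h

theorem pd2_eq_fderiv_fderiv (hφ : ContDiff ℝ 2 φ) (y : Fin d → ℝ) (i j : Fin d) :
    pd2 φ y i j = fderiv ℝ (fderiv ℝ φ) y (Pi.single i 1) (Pi.single j 1) := by
  have hdf : DifferentiableAt ℝ (fderiv ℝ φ) y :=
    (hφ.fderiv_right (m := 1) le_rfl).differentiable one_ne_zero y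
  rw [pd2, fderiv_clm_apply hdf (differentiableAt_const _)]
  simp

theorem abs_pd2_le_norm_iteratedFDeriv (hφ : ContDiff ℝ 2 φ) (y : Fin d → ℝ) (i j : Fin d) :
    |pd2 φ y i j| ≤ ‖iteratedFDeriv ℝ 2 φ y‖ := by
  have h := (iteratedFDeriv ℝ 2 φ y).le_opNorm ![Pi.single i 1, Pi.single j 1]
  rw [iteratedFDeriv_two_apply] at h
  simpa [pd2_eq_fderiv_fderiv hφ, Fin.prod_univ_two, Pi.norm_single] using h

theorem continuous_pd1 (hφ : ContDiff ℝ 1 φ) (i : Fin d) : Continuous fun y => pd1 φ y i :=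
  (hφ.continuous_fderiv one_ne_zero).clm_apply continuous_const

theorem continuous_pd2 (hφ : ContDiff ℝ 2 φ) (i j : Fin d) : Continuous fun y => pd2 φ y i j :=
  (((hφ.fderiv_right (m := 1) le_rfl).clm_apply contDiff_const).continuous_fderiv
    one_ne_zero).clm_apply continuous_const

theorem Filter.EventuallyEq.genL_eq (h : φ =ᶠ[𝓝 y] ψ) : genL f a φ y = genL f a ψ y := by
  have hpd1 : ∀ i, pd1 φ y i = pd1 ψ y i := fun i => by rw [pd1, pd1, h.fderiv_eq]
  have hpd2 : ∀ i j, pd2 φ y i j = pd2 ψ y i j := fun i j => by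
    have hj : (fun z => fderiv ℝ φ z (Pi.single j 1)) =ᶠ[𝓝 y]
        fun z => fderiv ℝ ψ z (Pi.single j 1) := h.fderiv.fun_comp (· (Pi.single j 1))
    rw [pd2, pd2, hj.fderiv_eq]
  simp only [genL, hpd1, hpd2]

theorem continuous_genL (hf : ∀ i, Continuous fun y => f y i)
    (ha : ∀ i j, Continuous fun y => a y i j) (hφ : ContDiff ℝ 2 φ) :
    Continuous (genL f a φ) :=
  (continuous_finsetSum _ fun i _ => (hf i).mul (continuous_pd1 (hφ.of_le one_le_two) i)).add
    (continuous_finsetSum _ fun i _ =>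
      continuous_finsetSum _ fun j _ => (ha i j).mul (continuous_pd2 hφ i j))

theorem genL_sub_genL (f₁ f₂ : (Fin d → ℝ) → Fin d → ℝ) (a₁ a₂ : (Fin d → ℝ) → Fin d → Fin d → ℝ)
    (φ : (Fin d → ℝ) → ℝ) (y : Fin d → ℝ) :
    genL f₂ a₂ φ y - genL f₁ a₁ φ y = genL (f₂ - f₁) (a₂ - a₁) φ y := by
  simp only [genL, Pi.sub_apply, sub_mul, Finset.sum_sub_distrib]
  ring

theorem abs_genL_le (hφ : ContDiff ℝ 2 φ) {F A P : ℝ} (hf : ∀ i, |f y i| ≤ F)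
    (ha : ∀ i j, |a y i j| ≤ A) (hφ₁ : ‖iteratedFDeriv ℝ 1 φ y‖ ≤ P)
    (hφ₂ : ‖iteratedFDeriv ℝ 2 φ y‖ ≤ P) :
    |genL f a φ y| ≤ (d * F + d ^ 2 * A) * P := by
  have hmul : ∀ {b c B : ℝ}, |b| ≤ B → |c| ≤ P → |b * c| ≤ B * P := fun hb hc =>
    (abs_mul _ _).trans_le (mul_le_mul hb hc (abs_nonneg _) ((abs_nonneg _).trans hb))
  calc |genL f a φ y|
      ≤ ∑ i, |f y i * pd1 φ y i| + ∑ i, ∑ j, |a y i j * pd2 φ y i j| := by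
        refine (abs_add_le _ _).trans (add_le_add (Finset.abs_sum_le_sum_abs _ _) ?_)
        exact (Finset.abs_sum_le_sum_abs _ _).trans
          (Finset.sum_le_sum fun i _ => Finset.abs_sum_le_sum_abs _ _)
    _ ≤ ∑ _i : Fin d, F * P + ∑ _i : Fin d, ∑ _j : Fin d, A * P := by
        refine add_le_add (Finset.sum_le_sum fun i _ => ?_)
          (Finset.sum_le_sum fun i _ => Finset.sum_le_sum fun j _ => ?_)
        · exact hmul (hf i) ((abs_pd1_le_norm_iteratedFDeriv φ y i).trans hφ₁)
        · exact hmul (ha i j) ((abs_pd2_le_norm_iteratedFDeriv hφ y i j).trans hφ₂)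
    _ = (d * F + d ^ 2 * A) * P := by
        simp only [Finset.sum_const, Finset.card_univ, Fintype.card_fin, nsmul_eq_mul]; ring

theorem abs_genL_le_mul_one_add_pow (hφ : ContDiff ℝ 2 φ) {F A P : ℝ} {p r q : ℕ}
    (hF : 0 ≤ F) (hA : 0 ≤ A)
    (hf : ∀ i, |f y i| ≤ F * (1 + ‖y‖ ^ p)) (ha : ∀ i j, |a y i j| ≤ A * (1 + ‖y‖ ^ r))
    (hφ₁ : ‖iteratedFDeriv ℝ 1 φ y‖ ≤ P * (1 + ‖y‖ ^ q))
    (hφ₂ : ‖iteratedFDeriv ℝ 2 φ y‖ ≤ P * (1 + ‖y‖ ^ q)) :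
    |genL f a φ y| ≤ 6 * (d * F + d ^ 2 * A) * P * (1 + ‖y‖ ^ (p + r + q)) := by
  have ht := norm_nonneg y
  have hP : 0 ≤ P := nonneg_of_mul_nonneg_left ((norm_nonneg _).trans hφ₁) (by positivity)
  have hp := one_add_pow_le_two_mul_one_add_pow ht (Nat.le_add_right p r)
  have hr := one_add_pow_le_two_mul_one_add_pow ht (Nat.le_add_left r p)
  have hprq := one_add_pow_mul_one_add_pow_le ht (p + r) q
  calc |genL f a φ y|
      ≤ (d * (F * (1 + ‖y‖ ^ p)) + d ^ 2 * (A * (1 + ‖y‖ ^ r))) * (P * (1 + ‖y‖ ^ q)) :=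
        abs_genL_le hφ hf ha hφ₁ hφ₂
    _ ≤ (d * (F * (2 * (1 + ‖y‖ ^ (p + r)))) + d ^ 2 * (A * (2 * (1 + ‖y‖ ^ (p + r))))) *
          (P * (1 + ‖y‖ ^ q)) := by gcongr
    _ = 2 * (d * F + d ^ 2 * A) * P * ((1 + ‖y‖ ^ (p + r)) * (1 + ‖y‖ ^ q)) := by ring
    _ ≤ 2 * (d * F + d ^ 2 * A) * P * (3 * (1 + ‖y‖ ^ (p + r + q))) := by gcongr
    _ = 6 * (d * F + d ^ 2 * A) * P * (1 + ‖y‖ ^ (p + r + q)) := by ring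

theorem HasCompactSupport.cbTwo (hsupp : HasCompactSupport φ) (hφ : ContDiff ℝ 2 φ) :
    CbTwo φ := by
  obtain ⟨B₀, hB₀⟩ := hsupp.exists_bound_of_continuous hφ.continuous
  obtain ⟨B₁, hB₁⟩ := (hsupp.iteratedFDeriv 1).exists_bound_of_continuous
    (hφ.continuous_iteratedFDeriv one_le_two)
  obtain ⟨B₂, hB₂⟩ := (hsupp.iteratedFDeriv 2).exists_bound_of_continuous
    (hφ.continuous_iteratedFDeriv le_rfl)
  exact ⟨hφ, max B₀ (max B₁ B₂), fun y => ⟨(hB₀ y).trans (le_max_left _ _),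
    (hB₁ y).trans ((le_max_left _ _).trans (le_max_right _ _)),
    (hB₂ y).trans ((le_max_right _ _).trans (le_max_right _ _))⟩⟩

end Generator

section Cutoff

variable {E : Type*} [NormedAddCommGroup E] [NormedSpace ℝ E]

theorem norm_iteratedFDeriv_le_of_le_two {φ : E → ℝ} {y : E} {b : ℝ}
    (h : |φ y| ≤ b ∧ ‖iteratedFDeriv ℝ 1 φ y‖ ≤ b ∧ ‖iteratedFDeriv ℝ 2 φ y‖ ≤ b) :
    ∀ k ≤ 2, ‖iteratedFDeriv ℝ k φ y‖ ≤ b := by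
  intro k hk
  interval_cases k
  · simpa only [norm_iteratedFDeriv_zero, Real.norm_eq_abs] using h.1
  · exact h.2.1
  · exact h.2.2

theorem norm_iteratedFDeriv_mul_le_of_le {f g : E → ℝ} {n : ℕ} (hf : ContDiff ℝ n f)
    (hg : ContDiff ℝ n g) {x : E} {A B : ℝ} (hfA : ∀ k ≤ n, ‖iteratedFDeriv ℝ k f x‖ ≤ A)
    (hgB : ∀ k ≤ n, ‖iteratedFDeriv ℝ k g x‖ ≤ B) :
    ‖iteratedFDeriv ℝ n (fun y => f y * g y) x‖ ≤ 2 ^ n * A * B := by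
  have hA : 0 ≤ A := (norm_nonneg _).trans (hfA 0 n.zero_le)
  calc ‖iteratedFDeriv ℝ n (fun y => f y * g y) x‖
      ≤ ∑ k ∈ Finset.range (n + 1), (n.choose k : ℝ) * ‖iteratedFDeriv ℝ k f x‖ *
          ‖iteratedFDeriv ℝ (n - k) g x‖ := norm_iteratedFDeriv_mul_le hf hg x le_rfl
    _ ≤ ∑ k ∈ Finset.range (n + 1), (n.choose k : ℝ) * A * B := by
        gcongr with k hk
        · exact hfA k (Nat.lt_succ_iff.mp (Finset.mem_range.mp hk))
        · exact hgB _ (n.sub_le k)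
    _ = 2 ^ n * A * B := by
        rw [← Finset.sum_mul, ← Finset.sum_mul, ← Nat.cast_sum, Nat.sum_range_choose]; simp

variable [HasContDiffBump E]

variable (E) in
def unitBump : ContDiffBump (0 : E) := ⟨1, 2, one_pos, one_lt_two⟩

variable (E) in
/-- Equal to `1` on the ball of radius `n + 1`; rescaling one fixed bump (rather than taking
bumps of growing radius) keeps the derivatives bounded uniformly in `n`. -/
def cutoff (n : ℕ) (z : E) : ℝ :=
  unitBump E (((n : ℝ) + 1)⁻¹ • z)

theorem contDiff_cutoff (n : ℕ) {k : ℕ∞} : ContDiff ℝ k (cutoff E n) :=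
  (unitBump E).contDiff.comp (contDiff_const_smul _)

theorem hasCompactSupport_cutoff [FiniteDimensional ℝ E] (n : ℕ) :
    HasCompactSupport (cutoff E n) :=
  (unitBump E).hasCompactSupport.comp_homeomorph (Homeomorph.smulOfNeZero _ (by positivity))

theorem exists_norm_iteratedFDeriv_cutoff_le [FiniteDimensional ℝ E] (N : ℕ) :
    ∃ B, ∀ n k, k ≤ N → ∀ y, ‖iteratedFDeriv ℝ k (cutoff E n) y‖ ≤ B := by
  have hχ : ∀ k : ℕ, ∃ B, ∀ y, ‖iteratedFDeriv ℝ k (unitBump E) y‖ ≤ B := fun k =>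
    ((unitBump E).hasCompactSupport.iteratedFDeriv k).exists_bound_of_continuous
      ((unitBump E).contDiff.continuous_iteratedFDeriv' (m := k))
  choose B hB using hχ
  refine ⟨∑ k ∈ Finset.range (N + 1), B k, fun n k hk y => ?_⟩
  have hc : |((n : ℝ) + 1)⁻¹| ≤ 1 := by
    rw [abs_of_pos (by positivity)]
    exact inv_le_one_of_one_le₀ (le_add_of_nonneg_left n.cast_nonneg)
  calc ‖iteratedFDeriv ℝ k (cutoff E n) y‖
      = |((n : ℝ) + 1)⁻¹| ^ k * ‖iteratedFDeriv ℝ k (unitBump E) (((n : ℝ) + 1)⁻¹ • y)‖ := by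
        unfold cutoff
        rw [iteratedFDeriv_comp_const_smul _ ((unitBump E).contDiff (n := k)), norm_smul,
          norm_pow, Real.norm_eq_abs]
    _ ≤ 1 * B k :=
        mul_le_mul (pow_le_one₀ (abs_nonneg _) hc) (hB k _) (norm_nonneg _) zero_le_one
    _ ≤ ∑ k ∈ Finset.range (N + 1), B k := by
        rw [one_mul]
        exact Finset.single_le_sum (fun j _ => (norm_nonneg _).trans (hB j 0))
          (Finset.mem_range.mpr (Nat.lt_succ_of_le hk))

theorem eventually_cutoff_eventuallyEq_one (y : E) :
    ∀ᶠ n in atTop, cutoff E n =ᶠ[𝓝 y] 1 := by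
  filter_upwards [eventually_ge_atTop ⌈‖y‖⌉₊] with n hn
  filter_upwards [Metric.ball_mem_nhds y one_pos] with z hz
  have hz : ‖z‖ ≤ (n : ℝ) + 1 := by
    have := norm_le_of_mem_closedBall (Metric.ball_subset_closedBall hz)
    linarith [Nat.le_ceil ‖y‖, (Nat.cast_le (α := ℝ)).mpr hn]
  refine (unitBump E).one_of_mem_closedBall ?_
  rw [Metric.mem_closedBall, dist_zero_right, norm_smul, Real.norm_eq_abs,
    abs_of_pos (by positivity), inv_mul_le_iff₀ (by positivity)]
  simpa [unitBump] using hz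

end Cutoff

section Invariance

variable {d : ℕ} {f : (Fin d → ℝ) → Fin d → ℝ} {a : (Fin d → ℝ) → Fin d → Fin d → ℝ}
  {π : Measure (Fin d → ℝ)} {φ : (Fin d → ℝ) → ℝ}

theorem norm_iteratedFDeriv_mul_cutoff_le (hφ : ContDiff ℝ 2 φ) {K B : ℝ} {q : ℕ}
    (hφK : ∀ k ≤ 2, ∀ y, ‖iteratedFDeriv ℝ k φ y‖ ≤ K * (1 + ‖y‖ ^ q))
    (hB : ∀ n k, k ≤ 2 → ∀ y, ‖iteratedFDeriv ℝ k (cutoff (Fin d → ℝ) n) y‖ ≤ B)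
    (n k : ℕ) (hk : k ≤ 2) (y : Fin d → ℝ) :
    ‖iteratedFDeriv ℝ k (fun z => φ z * cutoff _ n z) y‖ ≤ 4 * K * B * (1 + ‖y‖ ^ q) := by
  have hK : 0 ≤ K * (1 + ‖y‖ ^ q) := (norm_nonneg _).trans (hφK 0 (by norm_num) y)
  have hB0 : 0 ≤ B := (norm_nonneg _).trans (hB n 0 (by norm_num) y)
  calc ‖iteratedFDeriv ℝ k (fun z => φ z * cutoff _ n z) y‖
      ≤ 2 ^ k * (K * (1 + ‖y‖ ^ q)) * B :=
        norm_iteratedFDeriv_mul_le_of_le (hφ.of_le (by exact_mod_cast hk)) (contDiff_cutoff n)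
          (fun j hj => hφK j (hj.trans hk) y) (fun j hj => hB n j (hj.trans hk) y)
    _ ≤ 4 * (K * (1 + ‖y‖ ^ q)) * B := by
        gcongr
        calc (2 : ℝ) ^ k ≤ 2 ^ 2 := pow_le_pow_right₀ one_le_two hk
          _ = 4 := by norm_num
    _ = 4 * K * B * (1 + ‖y‖ ^ q) := by ring

/-- The setting in which invariance extends from `C_b²` test functions to `C²` functions of
polynomial growth. -/
structure IsRegularInvariantMeasure (f : (Fin d → ℝ) → Fin d → ℝ)
    (a : (Fin d → ℝ) → Fin d → Fin d → ℝ) (π : Measure (Fin d → ℝ)) : Prop where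
  isInvariantMeasure : IsInvariantMeasure f a π
  integrable_norm_pow : ∀ q : ℕ, Integrable (fun y => ‖y‖ ^ q) π
  continuous_drift : ∀ i, Continuous fun y => f y i
  continuous_diffusion : ∀ i j, Continuous fun y => a y i j
  drift_growth : ∃ F : ℝ, ∃ p : ℕ, 0 ≤ F ∧ ∀ y i, |f y i| ≤ F * (1 + ‖y‖ ^ p)
  diffusion_growth : ∃ A : ℝ, ∃ r : ℕ, 0 ≤ A ∧ ∀ y i j, |a y i j| ≤ A * (1 + ‖y‖ ^ r)

namespace IsRegularInvariantMeasure

theorem integral_genL_eq_zero (hπ : IsRegularInvariantMeasure f a π) (hφ : ContDiff ℝ 2 φ)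
    {K : ℝ} {q : ℕ} (hφK : ∀ k ≤ 2, ∀ y, ‖iteratedFDeriv ℝ k φ y‖ ≤ K * (1 + ‖y‖ ^ q)) :
    ∫ y, genL f a φ y ∂π = 0 := by
  have := hπ.isInvariantMeasure.1
  obtain ⟨F, p, hF, hf⟩ := hπ.drift_growth
  obtain ⟨A, r, hA, ha⟩ := hπ.diffusion_growth
  obtain ⟨B, hB⟩ := exists_norm_iteratedFDeriv_cutoff_le (E := Fin d → ℝ) 2
  set φn : ℕ → (Fin d → ℝ) → ℝ := fun n z => φ z * cutoff _ n z
  have hφn : ∀ n, ContDiff ℝ 2 (φn n) := fun n => hφ.mul (contDiff_cutoff n)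
  have hφn_le := norm_iteratedFDeriv_mul_cutoff_le hφ hφK hB
  have hzero : ∀ n, ∫ y, genL f a (φn n) y ∂π = 0 := fun n =>
    hπ.isInvariantMeasure.2 _ ((hasCompactSupport_cutoff n).mul_left.cbTwo (hφn n))
  have hdom : ∀ n y, |genL f a (φn n) y| ≤
      6 * (d * F + d ^ 2 * A) * (4 * K * B) * (1 + ‖y‖ ^ (p + r + q)) := fun n y =>
    abs_genL_le_mul_one_add_pow (hφn n) hF hA (hf y) (ha y)
      (hφn_le n 1 one_le_two y) (hφn_le n 2 le_rfl y)
  have hlim : ∀ y, Tendsto (fun n => genL f a (φn n) y) atTop (𝓝 (genL f a φ y)) := fun y =>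
    tendsto_const_nhds.congr' <| (eventually_cutoff_eventuallyEq_one y).mono fun n hn =>
      (Filter.EventuallyEq.genL_eq <| hn.mono fun z hz => by simp [φn, hz]).symm
  have hconv := tendsto_integral_of_dominated_convergence _
    (fun n => (continuous_genL hπ.continuous_drift hπ.continuous_diffusion
      (hφn n)).aestronglyMeasurable)
    (integrable_mul_one_add_pow (hπ.integrable_norm_pow _) _) (fun n => .of_forall (hdom n))
    (.of_forall hlim)
  simp only [hzero] at hconv
  exact tendsto_nhds_unique hconv tendsto_const_nhds

theorem integrable_genL (hπ : IsRegularInvariantMeasure f a π) (hφ : ContDiff ℝ 2 φ)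
    {K : ℝ} {q : ℕ} (hφK : ∀ k ≤ 2, ∀ y, ‖iteratedFDeriv ℝ k φ y‖ ≤ K * (1 + ‖y‖ ^ q)) :
    Integrable (genL f a φ) π := by
  have := hπ.isInvariantMeasure.1
  obtain ⟨F, p, hF, hf⟩ := hπ.drift_growth
  obtain ⟨A, r, hA, ha⟩ := hπ.diffusion_growth
  exact integrable_of_abs_le_mul_one_add_pow (hπ.integrable_norm_pow _)
    (continuous_genL hπ.continuous_drift hπ.continuous_diffusion hφ).aestronglyMeasurable
    fun y => abs_genL_le_mul_one_add_pow hφ hF hA (hf y) (ha y) (hφK 1 one_le_two y)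
      (hφK 2 le_rfl y)

variable {f₂ : (Fin d → ℝ) → Fin d → ℝ} {a₂ : (Fin d → ℝ) → Fin d → Fin d → ℝ}

theorem integral_sub_eq_integral_genL_sub (hπ : IsRegularInvariantMeasure f a π)
    (hφ : ContDiff ℝ 2 φ) {K : ℝ} {q : ℕ}
    (hφK : ∀ k ≤ 2, ∀ y, ‖iteratedFDeriv ℝ k φ y‖ ≤ K * (1 + ‖y‖ ^ q))
    {g : (Fin d → ℝ) → ℝ} {c : ℝ} (hg : Integrable g π) (hpde : ∀ y, genL f₂ a₂ φ y = g y - c) :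
    ∫ y, g y ∂π - c = ∫ y, genL (f₂ - f) (a₂ - a) φ y ∂π := by
  have := hπ.isInvariantMeasure.1
  have hgc : Integrable (genL f₂ a₂ φ) π := by
    rw [funext hpde]; exact hg.sub (integrable_const c)
  calc ∫ y, g y ∂π - c = ∫ y, genL f₂ a₂ φ y ∂π := by
        simp only [hpde, integral_sub hg (integrable_const c), integral_const, probReal_univ,
          one_smul]
    _ = ∫ y, genL f₂ a₂ φ y ∂π - ∫ y, genL f a φ y ∂π := by
        rw [hπ.integral_genL_eq_zero hφ hφK, sub_zero]
    _ = ∫ y, genL (f₂ - f) (a₂ - a) φ y ∂π := by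
        rw [← integral_sub hgc (hπ.integrable_genL hφ hφK)]
        simp only [genL_sub_genL]

theorem abs_integral_sub_le_of_genL_eq (hπ : IsRegularInvariantMeasure f a π)
    (hφ : ContDiff ℝ 2 φ) {K : ℝ} {q : ℕ}
    (hφK : ∀ k ≤ 2, ∀ y, ‖iteratedFDeriv ℝ k φ y‖ ≤ K * (1 + ‖y‖ ^ q))
    {Lf La : ℝ} {mf ma : ℕ} (hLf : 0 ≤ Lf) (hLa : 0 ≤ La)
    (hΔf : ∀ y i, |f y i - f₂ y i| ≤ Lf * (1 + ‖y‖ ^ mf))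
    (hΔa : ∀ y i j, |a y i j - a₂ y i j| ≤ La * (1 + ‖y‖ ^ ma))
    {g : (Fin d → ℝ) → ℝ} {c M : ℝ} (hg : Integrable g π) (hpde : ∀ y, genL f₂ a₂ φ y = g y - c)
    (hM : ∫ y, ‖y‖ ^ (mf + ma + q) ∂π ≤ M) :
    |∫ y, g y ∂π - c| ≤ 6 * (d * Lf + d ^ 2 * La) * K * (1 + M) := by
  have := hπ.isInvariantMeasure.1
  rw [hπ.integral_sub_eq_integral_genL_sub hφ hφK hg hpde]
  refine abs_integral_le_of_abs_le_mul_one_add_pow (hπ.integrable_norm_pow _) hM fun y => ?_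
  have hΔf' : ∀ i, |(f₂ - f) y i| ≤ Lf * (1 + ‖y‖ ^ mf) := fun i => by
    simpa only [Pi.sub_apply, abs_sub_comm] using hΔf y i
  have hΔa' : ∀ i j, |(a₂ - a) y i j| ≤ La * (1 + ‖y‖ ^ ma) := fun i j => by
    simpa only [Pi.sub_apply, abs_sub_comm] using hΔa y i j
  exact (abs_genL_le_mul_one_add_pow hφ hLf hLa hΔf' hΔa' (hφK 1 one_le_two y)
    (hφK 2 le_rfl y)).trans_eq (by ring)

end IsRegularInvariantMeasure

end Invariance

section Assumptions

variable {d : ℕ} {I M : Type*}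

theorem IsInvariantMeasure.isRegularInvariantMeasure {f : I → (Fin d → ℝ) → Fin d → ℝ}
    {a : I → (Fin d → ℝ) → Fin d → Fin d → ℝ} (hA1 : AssumptionA1 a) (hA2 : AssumptionA2 f)
    {p : I} {π : Measure (Fin d → ℝ)} (hπ : IsInvariantMeasure (f p) (a p) π)
    (hmom : ∀ q : ℕ, Integrable (fun y => ‖y‖ ^ q) π) :
    IsRegularInvariantMeasure (f p) (a p) π := by
  obtain ⟨-, -, ⟨A, hA⟩, haC, -⟩ := hA1
  obtain ⟨-, ⟨F, hF⟩, hfC, -⟩ := hA2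
  refine ⟨hπ, hmom, fun i => (hfC p i).continuous, fun i j => (haC p i j).continuous,
    ⟨max F 0, 1, le_max_right _ _, fun y i => ?_⟩, ⟨max A 0, 0, le_max_right _ _, fun y i j => ?_⟩⟩
  · calc |f p y i| ≤ ‖f p y‖ := norm_le_pi_norm (f p y) i
      _ ≤ F * (1 + ‖y‖) := hF p y
      _ ≤ max F 0 * (1 + ‖y‖ ^ 1) := by rw [pow_one]; gcongr; exact le_max_left _ _
  · calc |a p y i j| ≤ max A 0 := (hA p y i j).trans (le_max_left _ _)
      _ ≤ max A 0 * (1 + ‖y‖ ^ 0) := le_mul_of_one_le_right (le_max_right _ _) (by norm_num)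

theorem MixedHolder.exists_abs_sub_le {g : (Fin d → ℝ) → (Fin d → ℝ) → M → ℝ}
    (hg : MixedHolder g) : ∃ L, 0 ≤ L ∧ ∃ m : ℕ, ∀ x x' y μ,
      |g x y μ - g x' y μ| ≤ L * ‖x - x'‖ * (1 + ‖y‖ ^ m) := by
  obtain ⟨K, θ, m, hθ, -, hK⟩ := hg
  refine ⟨2 * max K 0, by positivity, m, fun x x' y μ => ?_⟩
  have hxy := hK x x' y y μ
  rw [sub_self, norm_zero, Real.zero_rpow hθ.ne', min_eq_right zero_le_one, zero_add] at hxy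
  calc |g x y μ - g x' y μ| ≤ K * ‖x - x'‖ * (1 + ‖y‖ ^ m + ‖y‖ ^ m) := hxy
    _ ≤ max K 0 * ‖x - x'‖ * (2 * (1 + ‖y‖ ^ m)) := by
        gcongr
        · exact le_max_left _ _
        · linarith
    _ = 2 * max K 0 * ‖x - x'‖ * (1 + ‖y‖ ^ m) := by ring

theorem MixedHolder.exists_abs_sub_le_of_fintype {ι : Type*} [Fintype ι]
    {g : ι → (Fin d → ℝ) → (Fin d → ℝ) → M → ℝ} (hg : ∀ i, MixedHolder (g i)) :
    ∃ L, 0 ≤ L ∧ ∃ m : ℕ, ∀ i x x' y μ,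
      |g i x y μ - g i x' y μ| ≤ L * ‖x - x'‖ * (1 + ‖y‖ ^ m) := by
  choose L hL m hm using fun i => (hg i).exists_abs_sub_le
  have hsum : 0 ≤ ∑ i, L i := Finset.sum_nonneg fun i _ => hL i
  refine ⟨2 * ∑ i, L i, by positivity, Finset.univ.sup m, fun i x x' y μ =>
    (hm i x x' y μ).trans ?_⟩
  calc L i * ‖x - x'‖ * (1 + ‖y‖ ^ m i)
      ≤ (∑ i, L i) * ‖x - x'‖ * (2 * (1 + ‖y‖ ^ Finset.univ.sup m)) := by
        gcongr
        · exact Finset.single_le_sum (fun j _ => hL j) (Finset.mem_univ i)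
        · exact one_add_pow_le_two_mul_one_add_pow (norm_nonneg y)
            (Finset.le_sup (f := m) (Finset.mem_univ i))
    _ = 2 * (∑ i, L i) * ‖x - x'‖ * (1 + ‖y‖ ^ Finset.univ.sup m) := by ring

end Assumptions

theorem averaged_coefficient_bounded_lipschitz_general
    (d : ℕ)
    (f : (Fin d → ℝ) → (Fin d → ℝ) → ProbMeas2 d → Fin d → ℝ)
    (a : (Fin d → ℝ) → (Fin d → ℝ) → ProbMeas2 d → Fin d → Fin d → ℝ)
    (π : (Fin d → ℝ) → ProbMeas2 d → Measure (Fin d → ℝ))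
    (hA1 : AssumptionA1 (fun p : (Fin d → ℝ) × ProbMeas2 d => fun y => a p.1 y p.2))
    (hA2 : AssumptionA2 (fun p : (Fin d → ℝ) × ProbMeas2 d => fun y => f p.1 y p.2))
    (hπ : ∀ x μ, IsInvariantMeasure (fun y => f x y μ) (fun y => a x y μ) (π x μ))
    (hπmom : ∀ q : ℕ, ∃ K : ℝ, ∀ x μ, Integrable (fun y => ‖y‖ ^ q) (π x μ) ∧
        (∫ y, ‖y‖ ^ q ∂(π x μ)) ≤ K)
    (h : (Fin d → ℝ) → (Fin d → ℝ) → ProbMeas2 d → ℝ)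
    (hcont : ∀ μ, Continuous fun p : (Fin d → ℝ) × (Fin d → ℝ) => h p.1 p.2 μ)
    (hpoly : PolyY h)
    (hlh : MixedHolder h)
    (hlf : ∀ i : Fin d, MixedHolder fun x y μ => f x y μ i)
    (hla : ∀ i j : Fin d, MixedHolder fun x y μ => a x y μ i j)
    (v : (Fin d → ℝ) → (Fin d → ℝ) → ProbMeas2 d → ℝ)
    (hvC2 : ∀ x μ, ContDiff ℝ 2 fun y => v x y μ)
    (hvpoly : ∃ K : ℝ, ∃ q : ℕ, ∀ x y μ,
        |v x y μ| ≤ K * (1 + ‖y‖ ^ q) ∧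
        ‖iteratedFDeriv ℝ 1 (fun z => v x z μ) y‖ ≤ K * (1 + ‖y‖ ^ q) ∧
        ‖iteratedFDeriv ℝ 2 (fun z => v x z μ) y‖ ≤ K * (1 + ‖y‖ ^ q))
    (hvpde : ∀ x y μ, genL (fun z => f x z μ) (fun z => a x z μ) (fun z => v x z μ) y =
        h x y μ - ∫ z, h x z μ ∂(π x μ)) :
    ∃ C' : ℝ,
      (∀ x μ, |∫ y, h x y μ ∂(π x μ)| ≤ C') ∧
      ∀ (x₁ x₂ : Fin d → ℝ) (μ : ProbMeas2 d),
        |(∫ y, h x₁ y μ ∂(π x₁ μ)) - ∫ y, h x₂ y μ ∂(π x₂ μ)| ≤ C' * ‖x₁ - x₂‖ := by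
  obtain ⟨Kh, mh, hKh⟩ := hpoly
  obtain ⟨Lh, -, mLh, hΔh⟩ := hlh.exists_abs_sub_le
  obtain ⟨Lf, hLf, mf, hΔf⟩ := MixedHolder.exists_abs_sub_le_of_fintype hlf
  obtain ⟨La, hLa, ma, hΔa⟩ :=
    MixedHolder.exists_abs_sub_le_of_fintype fun p : Fin d × Fin d => hla p.1 p.2
  obtain ⟨Kv, qv, hKv⟩ := hvpoly
  choose M hM using hπmom
  have hint : ∀ x x' μ, Integrable (fun y => h x y μ) (π x' μ) := fun x x' μ =>
    have := (hπ x' μ).1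
    integrable_of_abs_le_mul_one_add_pow (hM mh x' μ).1
      ((hcont μ).comp (continuous_const.prodMk continuous_id)).aestronglyMeasurable (hKh x · μ)
  refine ⟨max (Kh * (1 + M mh))
    (Lh * (1 + M mLh) + 6 * (d * Lf + d ^ 2 * La) * Kv * (1 + M (mf + ma + qv))),
    fun x μ => ?_, fun x₁ x₂ μ => ?_⟩
  · have := (hπ x μ).1
    exact (abs_integral_le_of_abs_le_mul_one_add_pow (hM mh x μ).1 (hM mh x μ).2
      (hKh x · μ)).trans (le_max_left _ _)
  have := (hπ x₁ μ).1
  have hdiff := abs_integral_le_of_abs_le_mul_one_add_pow (hM mLh x₁ μ).1 (hM mLh x₁ μ).2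
    (hΔh x₁ x₂ · μ)
  rw [integral_sub (hint x₁ x₁ μ) (hint x₂ x₁ μ)] at hdiff
  have hpoisson := ((hπ x₁ μ).isRegularInvariantMeasure (p := (x₁, μ)) hA1 hA2
    fun q => (hM q x₁ μ).1).abs_integral_sub_le_of_genL_eq (hvC2 x₂ μ)
    (fun k hk y => norm_iteratedFDeriv_le_of_le_two (hKv x₂ y μ) k hk)
    (mul_nonneg hLf (norm_nonneg _)) (mul_nonneg hLa (norm_nonneg _))
    (fun y i => hΔf i x₁ x₂ y μ) (fun y i j => hΔa (i, j) x₁ x₂ y μ) (hint x₂ x₁ μ)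
    (hvpde x₂ · μ) (hM _ x₁ μ).2
  calc |(∫ y, h x₁ y μ ∂(π x₁ μ)) - ∫ y, h x₂ y μ ∂(π x₂ μ)|
      ≤ |(∫ y, h x₁ y μ ∂(π x₁ μ)) - ∫ y, h x₂ y μ ∂(π x₁ μ)| +
          |(∫ y, h x₂ y μ ∂(π x₁ μ)) - ∫ y, h x₂ y μ ∂(π x₂ μ)| := abs_sub_le _ _ _
    _ ≤ _ := add_le_add hdiff hpoisson
    _ = (Lh * (1 + M mLh) + 6 * (d * Lf + d ^ 2 * La) * Kv * (1 + M (mf + ma + qv))) *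
          ‖x₁ - x₂‖ := by ring
    _ ≤ _ := mul_le_mul_of_nonneg_right (le_max_right _ _) (norm_nonneg _)

/-- the averaged coefficient `h̄(x,μ) = ∫ h(x,y,μ) π(dy;x,μ)` is
bounded and Lipschitz continuous in `x`, uniformly in `μ`. -/
theorem averaged_coefficient_bounded_lipschitz
    (d : ℕ) (hd : 0 < d)
    (f : (Fin d → ℝ) → (Fin d → ℝ) → ProbMeas2 d → Fin d → ℝ)
    (a : (Fin d → ℝ) → (Fin d → ℝ) → ProbMeas2 d → Fin d → Fin d → ℝ)
    (π : (Fin d → ℝ) → ProbMeas2 d → Measure (Fin d → ℝ))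
    (hA1 : AssumptionA1 (fun p : (Fin d → ℝ) × ProbMeas2 d => fun y => a p.1 y p.2))
    (hA2 : AssumptionA2 (fun p : (Fin d → ℝ) × ProbMeas2 d => fun y => f p.1 y p.2))
    (hπ : ∀ x μ, IsInvariantMeasure (fun y => f x y μ) (fun y => a x y μ) (π x μ))
    (hπmom : ∀ q : ℕ, ∃ K : ℝ, ∀ x μ, Integrable (fun y => ‖y‖ ^ q) (π x μ) ∧
        (∫ y, ‖y‖ ^ q ∂(π x μ)) ≤ K)
    (h : (Fin d → ℝ) → (Fin d → ℝ) → ProbMeas2 d → ℝ)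
    (hcont : ∀ μ, Continuous fun p : (Fin d → ℝ) × (Fin d → ℝ) => h p.1 p.2 μ)
    (hpoly : PolyY h)
    (hlh : MixedHolder h)
    (hlf : ∀ i : Fin d, MixedHolder fun x y μ => f x y μ i)
    (hla : ∀ i j : Fin d, MixedHolder fun x y μ => a x y μ i j)
    (v : (Fin d → ℝ) → (Fin d → ℝ) → ProbMeas2 d → ℝ)
    (hvC2 : ∀ x μ, ContDiff ℝ 2 fun y => v x y μ)
    (hvpoly : ∃ K : ℝ, ∃ q : ℕ, ∀ x y μ,
        |v x y μ| ≤ K * (1 + ‖y‖ ^ q) ∧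
        ‖iteratedFDeriv ℝ 1 (fun z => v x z μ) y‖ ≤ K * (1 + ‖y‖ ^ q) ∧
        ‖iteratedFDeriv ℝ 2 (fun z => v x z μ) y‖ ≤ K * (1 + ‖y‖ ^ q))
    (hvpde : ∀ x y μ, genL (fun z => f x z μ) (fun z => a x z μ) (fun z => v x z μ) y =
        h x y μ - ∫ z, h x z μ ∂(π x μ)) :
    ∃ C' : ℝ,
      (∀ x μ, |∫ y, h x y μ ∂(π x μ)| ≤ C') ∧
      ∀ (x₁ x₂ : Fin d → ℝ) (μ : ProbMeas2 d),
        |(∫ y, h x₁ y μ ∂(π x₁ μ)) - ∫ y, h x₂ y μ ∂(π x₂ μ)| ≤ C' * ‖x₁ - x₂‖ :=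
  averaged_coefficient_bounded_lipschitz_general d f a π hA1 hA2 hπ hπmom h hcont hpoly hlh hlf hla
    v hvC2 hvpoly hvpde
end
end

section
/- In the one-dimensional explicit invariant density setup, the operator Lw = a w'' + f w' has a Liouville property in the class of polynomially growing functions: if w : ℝ → ℝ is twice continuously differentiable, satisfies a(y)w''(y) + f(y)w'(y) = 0 for every y ∈ ℝ, and there are K, m with |w(y)| ≤ K(1+|y|^m) for all y, then w is constant. Consequently, for continuous h of at most polynomial growth with h̄ = ∫ h π dy, any two twice continuously differentiable solutions of a v'' + f v' = h − h̄ of at most polynomial growth differ by a constant, and there is at most one such solution satisfying ∫_ℝ v(y)π(y) dy = 0. -/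
/-!
Write `G(y) = ∫₀^y f/a`. The dissipativity condition makes `(G + ε y²)' · y ≤ 0` for large `|y|`,
whence `G(y) ≤ B - ε y²`. A solution of `a w'' + f w' = 0` has `(w' e^G)' = 0`, so
`|w'| = |w'(0)| e^{-G} ≥ |w'(0)| e^{ε y² - B}`; unless `w'(0) = 0`, `w` then grows like
`exp(ε y² / 2)`, which no polynomially bounded function does. The same bound makes `π` a
Gaussian-dominated probability density, so the difference `c` of two polynomially growing
solutions of the Poisson equation is fixed by `∫ v π` and vanishes when both are centred.
-/

open MeasureTheory

noncomputable section

/-- The explicit (unnormalized) one-dimensional invariant density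
`ρ(y) = a(y)⁻¹ exp(∫₀^y f(s)/a(s) ds)`. -/
def rho1 (a f : ℝ → ℝ) (y : ℝ) : ℝ :=
  (a y)⁻¹ * Real.exp (∫ s in (0:ℝ)..y, f s / a s)

/-- The normalizing constant `Z = ∫_ℝ ρ(y) dy`. -/
def Z1 (a f : ℝ → ℝ) : ℝ := ∫ y, rho1 a f y

/-- The normalized invariant density `π = ρ / Z`. -/
def piDen (a f : ℝ → ℝ) (y : ℝ) : ℝ := rho1 a f y / Z1 a f

/-- The average `h̄ = ∫_ℝ h(y) π(y) dy`. -/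
def hbar (a f h : ℝ → ℝ) : ℝ := ∫ y, h y * piDen a f y

/-- `F(y) = ∫_{−∞}^y (h(s) − h̄) π(s) ds`. -/
def Fint (a f h : ℝ → ℝ) (y : ℝ) : ℝ :=
  ∫ s in Set.Iic y, (h s - hbar a f h) * piDen a f s

/-- The explicit solution `v(y) = ∫₀^y F(s)/(a(s)π(s)) ds` of the one-dimensional
Poisson equation `a v'' + f v' = h − h̄`. -/
def vsol (a f h : ℝ → ℝ) (y : ℝ) : ℝ :=
  ∫ s in (0:ℝ)..y, Fint a f h s / (a s * piDen a f s)

open Filter Set Asymptotics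

lemma one_add_abs_pow_le_two_mul {y : ℝ} {k m : ℕ} (h : k ≤ m) :
    1 + |y| ^ k ≤ 2 * (1 + |y| ^ m) := by
  rcases le_total |y| 1 with hy | hy
  · have : |y| ^ k ≤ 1 := pow_le_one₀ (abs_nonneg y) hy
    nlinarith [pow_nonneg (abs_nonneg y) m]
  · have : |y| ^ k ≤ |y| ^ m := pow_le_pow_right₀ hy h
    nlinarith [pow_nonneg (abs_nonneg y) k]

def PolyGrowth (w : ℝ → ℝ) : Prop := ∃ K : ℝ, ∃ m : ℕ, ∀ y, |w y| ≤ K * (1 + |y| ^ m)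

namespace PolyGrowth

lemma const (c : ℝ) : PolyGrowth fun _ => c :=
  ⟨|c|, 0, fun _ => by simp only [pow_zero]; linarith [abs_nonneg c]⟩

lemma sub {v w : ℝ → ℝ} (hv : PolyGrowth v) (hw : PolyGrowth w) :
    PolyGrowth fun y => v y - w y := by
  obtain ⟨K, m, hK⟩ := hv
  obtain ⟨L, n, hL⟩ := hw
  have nonneg : ∀ {u : ℝ → ℝ} {K : ℝ} {m : ℕ}, (∀ y, |u y| ≤ K * (1 + |y| ^ m)) → 0 ≤ K :=
    fun {u K m} h => by
      have := h 0
      nlinarith [abs_nonneg (u 0), pow_nonneg (abs_nonneg (0 : ℝ)) m]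
  refine ⟨2 * (K + L), max m n, fun y => ?_⟩
  calc |v y - w y| ≤ |v y| + |w y| := abs_sub _ _
    _ ≤ K * (1 + |y| ^ m) + L * (1 + |y| ^ n) := add_le_add (hK y) (hL y)
    _ ≤ K * (2 * (1 + |y| ^ max m n)) + L * (2 * (1 + |y| ^ max m n)) := by
        gcongr
        exacts [nonneg hK, one_add_abs_pow_le_two_mul (le_max_left m n),
          nonneg hL, one_add_abs_pow_le_two_mul (le_max_right m n)]
    _ = 2 * (K + L) * (1 + |y| ^ max m n) := by ring

lemma isLittleO_exp_mul_sq {w : ℝ → ℝ} (hw : PolyGrowth w) {ε : ℝ} (hε : 0 < ε) :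
    w =o[atTop] fun y => Real.exp (ε * y ^ 2) := by
  obtain ⟨K, m, hK⟩ := hw
  have hw_pow : w =O[atTop] fun y => y ^ m := by
    refine IsBigO.of_bound (2 * K) ?_
    filter_upwards [eventually_ge_atTop 1] with y hy
    have hy0 : (0 : ℝ) ≤ y := zero_le_one.trans hy
    have h1 : (1 : ℝ) ≤ y ^ m := one_le_pow₀ hy
    have := hK y
    rw [Real.norm_eq_abs, Real.norm_eq_abs, abs_of_nonneg (pow_nonneg hy0 m)]
    rw [abs_of_nonneg hy0] at this
    nlinarith [abs_nonneg (w y)]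
  have hexp : (fun y => Real.exp (ε * y)) =O[atTop] fun y => Real.exp (ε * y ^ 2) := by
    refine IsBigO.of_bound 1 ?_
    filter_upwards [eventually_ge_atTop 1] with y hy
    simp only [Real.norm_eq_abs, Real.abs_exp, one_mul, Real.exp_le_exp]
    exact mul_le_mul_of_nonneg_left (by nlinarith) hε.le
  exact hw_pow.trans_isLittleO ((isLittleO_pow_exp_pos_mul_atTop m hε).trans_isBigO hexp)

lemma not_eventually_exp_mul_sq_le {w : ℝ → ℝ} (hw : PolyGrowth w) {c ε : ℝ} (hc : 0 < c)
    (hε : 0 < ε) : ¬ ∀ᶠ y in atTop, c * Real.exp (ε * y ^ 2) ≤ |w y| := by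
  intro hlow
  obtain ⟨y, hlow, hup⟩ := (hlow.and ((hw.isLittleO_exp_mul_sq hε).def (half_pos hc))).exists
  rw [Real.norm_eq_abs, Real.norm_eq_abs, Real.abs_exp] at hup
  nlinarith [Real.exp_pos (ε * y ^ 2)]

end PolyGrowth

lemma bddAbove_range_of_hasDerivAt_of_mul_nonpos {H H' : ℝ → ℝ} {T : ℝ}
    (hH : ∀ y, HasDerivAt H (H' y) y) (hsign : ∀ y, T ≤ |y| → H' y * y ≤ 0) :
    BddAbove (range H) := by
  have hcont : Continuous H := continuous_iff_continuousAt.2 fun y => (hH y).continuousAt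
  have hdiff : Differentiable ℝ H := fun y => (hH y).differentiableAt
  set R := |T|
  have hR : 0 ≤ R := abs_nonneg T
  have hT : ∀ y, R ≤ |y| → H' y * y ≤ 0 := fun y hy => hsign y ((le_abs_self T).trans hy)
  have anti : AntitoneOn H (Ici R) := by
    refine antitoneOn_of_deriv_nonpos (convex_Ici R) hcont.continuousOn
      hdiff.differentiableOn fun y hy => ?_
    rw [interior_Ici] at hy
    have hy0 : 0 < y := hR.trans_lt hy
    rw [(hH y).deriv]
    exact nonpos_of_mul_nonpos_left (hT y (by rw [abs_of_pos hy0]; exact hy.le)) hy0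
  have mono : MonotoneOn H (Iic (-R)) := by
    refine monotoneOn_of_deriv_nonneg (convex_Iic _) hcont.continuousOn
      hdiff.differentiableOn fun y hy => ?_
    rw [interior_Iic] at hy
    have hy0 : y < 0 := hy.trans_le (neg_nonpos.2 hR)
    rw [(hH y).deriv]
    exact nonneg_of_mul_nonpos_left
      (hT y (by rw [abs_of_neg hy0]; exact le_neg_of_le_neg hy.le)) hy0
  obtain ⟨M, hM⟩ := (isCompact_Icc (a := -R) (b := R)).bddAbove_image hcont.continuousOn
  have hM' : ∀ y ∈ Icc (-R) R, H y ≤ M := fun y hy => hM (mem_image_of_mem H hy)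
  refine ⟨M, forall_mem_range.2 fun y => ?_⟩
  rcases le_total R y with hy | hy
  · exact (anti self_mem_Ici hy hy).trans (hM' R ⟨by linarith, le_rfl⟩)
  rcases le_total y (-R) with hy' | hy'
  · exact (mono hy' self_mem_Iic hy').trans (hM' (-R) ⟨le_rfl, by linarith⟩)
  · exact hM' y ⟨hy', hy⟩

lemma exists_integral_le_sub_mul_sq {g : ℝ → ℝ} (hg : Continuous g) {κ D : ℝ} (hκ : 0 < κ)
    (hgD : ∀ s, g s * s ≤ -κ * s ^ 2 + D) :
    ∃ B, ∀ y, ∫ s in (0 : ℝ)..y, g s ≤ B - κ / 4 * y ^ 2 := by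
  have hH : ∀ y, HasDerivAt (fun t => (∫ s in (0 : ℝ)..t, g s) + κ / 4 * t ^ 2)
      (g y + κ / 2 * y) y := by
    intro y
    exact ((hg.integral_hasStrictDerivAt 0 y).hasDerivAt.add
      ((hasDerivAt_pow 2 y).const_mul (κ / 4))).congr_deriv (by ring)
  obtain ⟨M, hM⟩ := bddAbove_range_of_hasDerivAt_of_mul_nonpos (T := √(2 * D / κ)) hH
    fun y hy => by
      rw [← Real.sqrt_sq_eq_abs, Real.sqrt_le_sqrt_iff (sq_nonneg y), div_le_iff₀ hκ] at hy
      nlinarith [hgD y]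
  exact ⟨M, fun y => by linarith [hM (mem_range_self y)]⟩

lemma eq_mul_exp_neg_integral_of_deriv_add_mul_eq_zero {g u : ℝ → ℝ} (hg : Continuous g)
    (hu : Differentiable ℝ u) (hode : ∀ y, deriv u y + g y * u y = 0) (y : ℝ) :
    u y = u 0 * Real.exp (-∫ s in (0 : ℝ)..y, g s) := by
  have hφ : ∀ t, HasDerivAt (fun t => u t * Real.exp (∫ s in (0 : ℝ)..t, g s)) 0 t := fun t =>
    ((hu t).hasDerivAt.mul (hg.integral_hasStrictDerivAt 0 t).hasDerivAt.exp).congr_deriv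
      (by linear_combination Real.exp (∫ s in (0 : ℝ)..t, g s) * hode t)
  have hconst := is_const_of_deriv_eq_zero (fun t => (hφ t).differentiableAt)
    (fun t => (hφ t).deriv) y 0
  rw [intervalIntegral.integral_same, Real.exp_zero, mul_one] at hconst
  rw [Real.exp_neg, ← hconst, mul_inv_cancel_right₀ (Real.exp_ne_zero _)]

lemma exp_mul_sq_le_integral_exp_neg {G : ℝ → ℝ} (hG : Continuous G) {B ε : ℝ} (hε : 0 ≤ ε)
    (hGB : ∀ s, G s ≤ B - ε * s ^ 2) {y : ℝ} (hy : 1 ≤ y) :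
    Real.exp (-(ε + B)) * Real.exp (ε / 2 * y ^ 2) ≤ ∫ s in (0 : ℝ)..y, Real.exp (-G s) := by
  have hcont : Continuous fun s => Real.exp (-G s) := by fun_prop
  calc Real.exp (-(ε + B)) * Real.exp (ε / 2 * y ^ 2)
      = ∫ _ in (y - 1)..y, Real.exp (-(ε + B)) * Real.exp (ε / 2 * y ^ 2) := by simp
    _ ≤ ∫ s in (y - 1)..y, Real.exp (-G s) := by
        refine intervalIntegral.integral_mono_on (by linarith) intervalIntegrable_const
          (hcont.intervalIntegrable _ _) fun s hs => ?_
        rw [← Real.exp_add, Real.exp_le_exp]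
        -- on `[y - 1, y]` with `y ≥ 1` one has `s ^ 2 ≥ (y - 1) ^ 2 ≥ y ^ 2 / 2 - 1`
        nlinarith [hGB s, hs.1, mul_nonneg hε (sq_nonneg (y - 2)),
          mul_le_mul_of_nonneg_left (pow_le_pow_left₀ (by linarith) hs.1 2) hε]
    _ ≤ ∫ s in (0 : ℝ)..y, Real.exp (-G s) :=
        intervalIntegral.integral_mono_interval (by linarith) (by linarith) le_rfl
          (Eventually.of_forall fun s => (Real.exp_pos _).le) (hcont.intervalIntegrable _ _)

lemma exists_eq_const_of_deriv_deriv_add_mul_deriv_eq_zero {g w : ℝ → ℝ} (hg : Continuous g)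
    {B ε : ℝ} (hε : 0 < ε) (hgB : ∀ y, ∫ s in (0 : ℝ)..y, g s ≤ B - ε * y ^ 2)
    (hw : ContDiff ℝ 2 w) (hode : ∀ y, deriv (deriv w) y + g y * deriv w y = 0)
    (hpoly : PolyGrowth w) : ∃ c, ∀ y, w y = c := by
  have hw1 : Differentiable ℝ w := hw.differentiable (by norm_num)
  have hw2 : Differentiable ℝ (deriv w) := hw.differentiable_deriv_two
  have hu := eq_mul_exp_neg_integral_of_deriv_add_mul_eq_zero hg hw2 hode
  refine ⟨w 0, fun y => ?_⟩
  by_cases h0 : deriv w 0 = 0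
  · exact is_const_of_deriv_eq_zero hw1 (fun y => by rw [hu y, h0, zero_mul]) y 0
  exfalso
  have hG : Continuous fun y => ∫ s in (0 : ℝ)..y, g s :=
    intervalIntegral.continuous_primitive (fun _ _ => hg.intervalIntegrable _ _) 0
  have hftc : ∀ y, w y - w 0 =
      deriv w 0 * ∫ s in (0 : ℝ)..y, Real.exp (-∫ t in (0 : ℝ)..s, g t) := by
    intro y
    rw [← intervalIntegral.integral_const_mul, ← intervalIntegral.integral_deriv_eq_sub
      (fun x _ => hw1 x) (hw2.continuous.intervalIntegrable _ _)]
    exact intervalIntegral.integral_congr fun s _ => hu s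
  refine (hpoly.sub (PolyGrowth.const (w 0))).not_eventually_exp_mul_sq_le
    (c := |deriv w 0| * Real.exp (-(ε + B))) (by positivity) (half_pos hε) ?_
  filter_upwards [eventually_ge_atTop 1] with y hy
  have hlow := exp_mul_sq_le_integral_exp_neg hG hε.le hgB hy
  have hI := (by positivity : (0 : ℝ) ≤ Real.exp (-(ε + B)) * Real.exp (ε / 2 * y ^ 2)).trans hlow
  rw [hftc y, abs_mul, abs_of_nonneg hI, mul_assoc]
  exact mul_le_mul_of_nonneg_left hlow (abs_nonneg _)

lemma PolyGrowth.integrable_mul {v p : ℝ → ℝ} (hv : PolyGrowth v) (hvc : Continuous v)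
    (hpc : Continuous p) {D ε : ℝ} (hε : 0 < ε) (hp : ∀ y, |p y| ≤ D * Real.exp (-ε * y ^ 2)) :
    Integrable fun y => v y * p y := by
  obtain ⟨K, m, hK⟩ := hv
  have hgauss : Integrable fun y : ℝ => (1 + |y| ^ m) * Real.exp (-ε * y ^ 2) := by
    have hpow : Integrable fun y : ℝ => |y| ^ m * Real.exp (-ε * y ^ 2) := by
      have hm : (-1 : ℝ) < m := by linarith [m.cast_nonneg (α := ℝ)]
      refine (integrable_rpow_mul_exp_neg_mul_sq hε hm).abs.congr
        (Eventually.of_forall fun y => ?_)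
      simp only [abs_mul, Real.abs_exp, Real.rpow_natCast, abs_pow]
    refine ((integrable_exp_neg_mul_sq hε).add hpow).congr (Eventually.of_forall fun y => ?_)
    simp only [Pi.add_apply]
    ring
  refine (hgauss.const_mul (K * D)).mono' (hvc.mul hpc).aestronglyMeasurable
    (Eventually.of_forall fun y => ?_)
  calc ‖v y * p y‖ = |v y| * |p y| := by rw [Real.norm_eq_abs, abs_mul]
    _ ≤ K * (1 + |y| ^ m) * (D * Real.exp (-ε * y ^ 2)) :=
        mul_le_mul (hK y) (hp y) (abs_nonneg _) ((abs_nonneg _).trans (hK y))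
    _ = K * D * ((1 + |y| ^ m) * Real.exp (-ε * y ^ 2)) := by ring

lemma eq_of_sub_eq_const_of_integral_mul_eq {p v₁ v₂ : ℝ → ℝ} {c : ℝ} (hp : Integrable p)
    (hp₁ : ∫ y, p y = 1) (hv₂ : Integrable fun y => v₂ y * p y) (hc : ∀ y, v₁ y - v₂ y = c)
    (h : ∫ y, v₁ y * p y = ∫ y, v₂ y * p y) : v₁ = v₂ := by
  have hshift : ∫ y, v₁ y * p y = (∫ y, v₂ y * p y) + c := by
    rw [← mul_one c, ← hp₁, ← integral_const_mul, ← integral_add hv₂ (hp.const_mul c)]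
    congr 1 with y
    rw [← hc y]
    ring
  funext y
  linarith [hc y]

lemma div_le_neg_div_mul_add_div {x t a lm lp β C : ℝ} (hlm : 0 < lm) (hlma : lm ≤ a)
    (halp : a ≤ lp) (hβ : 0 ≤ β) (ht : 0 ≤ t) (hC : 0 ≤ C) (hx : x ≤ -β * t + C) :
    x / a ≤ -(β / lp) * t + C / lm := by
  have ha : 0 < a := hlm.trans_le hlma
  have hlp : 0 < lp := ha.trans_le halp
  have hβt : β / lp * t ≤ β / lm * t :=
    mul_le_mul_of_nonneg_right (div_le_div_of_nonneg_left hβ hlm (hlma.trans halp)) ht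
  rcases le_total x 0 with hx0 | hx0
  · calc x / a ≤ x / lp := by rw [div_le_div_iff₀ ha hlp]; nlinarith
      _ ≤ (-β * t + C) / lp := div_le_div_of_nonneg_right hx hlp.le
      _ = -(β / lp) * t + C / lp := by ring
      _ ≤ -(β / lp) * t + C / lm := by gcongr; exact hlma.trans halp
  · calc x / a ≤ x / lm := div_le_div_of_nonneg_left hx0 hlm hlma
      _ ≤ (-β * t + C) / lm := div_le_div_of_nonneg_right hx hlm.le
      _ = -(β / lm) * t + C / lm := by ring
      _ ≤ -(β / lp) * t + C / lm := by linarith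

def diffusionGenerator (a f w : ℝ → ℝ) (y : ℝ) : ℝ :=
  a y * deriv (deriv w) y + f y * deriv w y

lemma diffusionGenerator_sub {a f v₁ v₂ : ℝ → ℝ} (h₁ : ContDiff ℝ 2 v₁) (h₂ : ContDiff ℝ 2 v₂)
    (y : ℝ) : diffusionGenerator a f (fun x => v₁ x - v₂ x) y =
      diffusionGenerator a f v₁ y - diffusionGenerator a f v₂ y := by
  have hd : deriv (fun x => v₁ x - v₂ x) = fun x => deriv v₁ x - deriv v₂ x :=
    funext fun x =>
      deriv_fun_sub (h₁.differentiable (by norm_num) x) (h₂.differentiable (by norm_num) x)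
  rw [diffusionGenerator, diffusionGenerator, diffusionGenerator, hd,
    deriv_fun_sub (h₁.differentiable_deriv_two y) (h₂.differentiable_deriv_two y)]
  ring

lemma exists_integral_div_le_sub_mul_sq {a f : ℝ → ℝ} {lm lp β C : ℝ} (hac : Continuous a)
    (hfc : Continuous f) (hlm : 0 < lm) (hbnd : ∀ y, lm ≤ a y ∧ a y ≤ lp) (hβ : 0 < β)
    (hdis : ∀ y, f y * y ≤ -β * y ^ 2 + C) :
    ∃ B, ∀ y, ∫ s in (0 : ℝ)..y, f s / a s ≤ B - β / lp / 4 * y ^ 2 := by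
  have hlp : 0 < lp := hlm.trans_le ((hbnd 0).1.trans (hbnd 0).2)
  have hC : 0 ≤ C := by simpa using hdis 0
  refine exists_integral_le_sub_mul_sq (g := fun s => f s / a s) (D := C / lm)
    (hfc.div hac fun y => (hlm.trans_le (hbnd y).1).ne') (div_pos hβ hlp) fun s => ?_
  rw [div_mul_eq_mul_div]
  exact div_le_neg_div_mul_add_div hlm (hbnd s).1 (hbnd s).2 hβ.le (sq_nonneg s) hC (hdis s)

lemma eq_const_of_diffusionGenerator_eq_zero {a f w : ℝ → ℝ} (hac : Continuous a)
    (hfc : Continuous f) (ha : ∀ y, 0 < a y) {B ε : ℝ} (hε : 0 < ε)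
    (hB : ∀ y, ∫ s in (0 : ℝ)..y, f s / a s ≤ B - ε * y ^ 2) (hw : ContDiff ℝ 2 w)
    (hgen : ∀ y, diffusionGenerator a f w y = 0) (hpoly : PolyGrowth w) : ∃ c, ∀ y, w y = c := by
  refine exists_eq_const_of_deriv_deriv_add_mul_deriv_eq_zero (g := fun s => f s / a s)
    (hfc.div hac fun y => (ha y).ne') hε hB hw (fun y => ?_) hpoly
  have := hgen y
  rw [diffusionGenerator] at this
  field_simp [(ha y).ne']
  linarith

lemma rho1_pos {a : ℝ → ℝ} (f : ℝ → ℝ) (ha : ∀ y, 0 < a y) (y : ℝ) : 0 < rho1 a f y :=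
  mul_pos (inv_pos.2 (ha y)) (Real.exp_pos _)

lemma continuous_rho1 {a f : ℝ → ℝ} (hac : Continuous a) (hfc : Continuous f)
    (ha : ∀ y, 0 < a y) : Continuous (rho1 a f) := by
  have hg : Continuous fun s => f s / a s := hfc.div hac fun y => (ha y).ne'
  have hG : Continuous fun y => ∫ s in (0 : ℝ)..y, f s / a s :=
    intervalIntegral.continuous_primitive (fun _ _ => hg.intervalIntegrable _ _) 0
  exact (hac.inv₀ fun y => (ha y).ne').mul (Real.continuous_exp.comp hG)

lemma abs_rho1_le {a f : ℝ → ℝ} {lm B ε : ℝ} (hlm : 0 < lm) (hlma : ∀ y, lm ≤ a y)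
    (hB : ∀ y, ∫ s in (0 : ℝ)..y, f s / a s ≤ B - ε * y ^ 2) (y : ℝ) :
    |rho1 a f y| ≤ lm⁻¹ * Real.exp B * Real.exp (-ε * y ^ 2) := by
  rw [abs_of_pos (rho1_pos f (fun y => hlm.trans_le (hlma y)) y), mul_assoc, ← Real.exp_add]
  exact mul_le_mul (inv_anti₀ hlm (hlma y)) (Real.exp_le_exp.2 (by linarith [hB y]))
    (Real.exp_pos _).le (inv_pos.2 hlm).le

lemma PolyGrowth.integrable_mul_rho1 {v a f : ℝ → ℝ} (hv : PolyGrowth v) (hvc : Continuous v)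
    (hac : Continuous a) (hfc : Continuous f) {lm B ε : ℝ} (hlm : 0 < lm)
    (hlma : ∀ y, lm ≤ a y) (hε : 0 < ε) (hB : ∀ y, ∫ s in (0 : ℝ)..y, f s / a s ≤ B - ε * y ^ 2) :
    Integrable fun y => v y * rho1 a f y :=
  hv.integrable_mul hvc (continuous_rho1 hac hfc fun y => hlm.trans_le (hlma y)) hε
    (abs_rho1_le hlm hlma hB)

lemma PolyGrowth.integrable_mul_piDen {v a f : ℝ → ℝ} (hv : PolyGrowth v) (hvc : Continuous v)
    (hac : Continuous a) (hfc : Continuous f) {lm B ε : ℝ} (hlm : 0 < lm)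
    (hlma : ∀ y, lm ≤ a y) (hε : 0 < ε) (hB : ∀ y, ∫ s in (0 : ℝ)..y, f s / a s ≤ B - ε * y ^ 2) :
    Integrable fun y => v y * piDen a f y := by
  simpa only [piDen, mul_div_assoc] using
    (hv.integrable_mul_rho1 hvc hac hfc hlm hlma hε hB).div_const (Z1 a f)

lemma integral_piDen {a f : ℝ → ℝ} (hρ : Integrable (rho1 a f)) (hpos : ∀ y, 0 < rho1 a f y) :
    ∫ y, piDen a f y = 1 := by
  have hZ : 0 < Z1 a f := by
    refine (integral_pos_iff_support_of_nonneg (fun y => (hpos y).le) hρ).2 ?_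
    rw [Function.support_eq_univ fun y => (hpos y).ne']
    simp
  simp only [piDen, integral_div]
  exact div_self hZ.ne'

theorem one_dim_liouville_and_uniqueness_general
    (a f : ℝ → ℝ) (lm lp β C : ℝ)
    (hac : Continuous a) (hfc : Continuous f)
    (hlm : 0 < lm) (hbnd : ∀ y, lm ≤ a y ∧ a y ≤ lp)
    (hβ : 0 < β) (hdis : ∀ y, f y * y ≤ -β * y ^ 2 + C) :
    (∀ w : ℝ → ℝ, ContDiff ℝ 2 w →
      (∀ y, a y * deriv (deriv w) y + f y * deriv w y = 0) →
      (∃ K : ℝ, ∃ m : ℕ, ∀ y, |w y| ≤ K * (1 + |y| ^ m)) →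
      ∃ c : ℝ, ∀ y, w y = c) ∧
    (∀ h : ℝ → ℝ, Continuous h →
      (∃ K : ℝ, ∃ m : ℕ, ∀ y, |h y| ≤ K * (1 + |y| ^ m)) →
      ∀ v₁ v₂ : ℝ → ℝ, ContDiff ℝ 2 v₁ → ContDiff ℝ 2 v₂ →
        (∃ K : ℝ, ∃ m : ℕ, ∀ y, |v₁ y| ≤ K * (1 + |y| ^ m)) →
        (∃ K : ℝ, ∃ m : ℕ, ∀ y, |v₂ y| ≤ K * (1 + |y| ^ m)) →
        (∀ y, a y * deriv (deriv v₁) y + f y * deriv v₁ y = h y - hbar a f h) →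
        (∀ y, a y * deriv (deriv v₂) y + f y * deriv v₂ y = h y - hbar a f h) →
        (∃ c : ℝ, ∀ y, v₁ y - v₂ y = c) ∧
          ((∫ y, v₁ y * piDen a f y) = 0 → (∫ y, v₂ y * piDen a f y) = 0 → v₁ = v₂)) := by
  have hlma : ∀ y, lm ≤ a y := fun y => (hbnd y).1
  have ha : ∀ y, 0 < a y := fun y => hlm.trans_le (hlma y)
  obtain ⟨B, hB⟩ := exists_integral_div_le_sub_mul_sq hac hfc hlm hbnd hβ hdis
  have hε : 0 < β / lp / 4 := by
    have hlp : 0 < lp := (ha 0).trans_le (hbnd 0).2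
    positivity
  have liouville (w : ℝ → ℝ) (hw : ContDiff ℝ 2 w) (hgen : ∀ y, diffusionGenerator a f w y = 0)
      (hpoly : PolyGrowth w) : ∃ c, ∀ y, w y = c :=
    eq_const_of_diffusionGenerator_eq_zero hac hfc ha hε hB hw hgen hpoly
  refine ⟨liouville, fun _ _ _ v₁ v₂ hv₁ hv₂ hp₁ hp₂ he₁ he₂ => ?_⟩
  obtain ⟨c, hc⟩ := liouville _ (hv₁.sub hv₂)
    (fun y => by rw [diffusionGenerator_sub hv₁ hv₂, sub_eq_zero]; exact (he₁ y).trans (he₂ y).symm)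
    (PolyGrowth.sub hp₁ hp₂)
  have hπ := (PolyGrowth.const 1).integrable_mul_piDen continuous_const hac hfc hlm hlma hε hB
  have hρ := (PolyGrowth.const 1).integrable_mul_rho1 continuous_const hac hfc hlm hlma hε hB
  simp only [one_mul] at hπ hρ
  exact ⟨⟨c, hc⟩, fun h₁ h₂ => eq_of_sub_eq_const_of_integral_mul_eq hπ
    (integral_piDen hρ (rho1_pos f ha))
    (PolyGrowth.integrable_mul_piDen hp₂ hv₂.continuous hac hfc hlm hlma hε hB) hc
    (h₁.trans h₂.symm)⟩

/-- Liouville property of `Lw = a w'' + f w'` in the class of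
polynomially growing functions, and uniqueness, up to constants, of polynomially
growing solutions of the centered Poisson equation. -/
theorem one_dim_liouville_and_uniqueness
    (a f : ℝ → ℝ) (lm lp β C : ℝ)
    (hac : Continuous a) (hfc : Continuous f)
    (hlm : 0 < lm) (hbnd : ∀ y, lm ≤ a y ∧ a y ≤ lp)
    (hβ : 0 < β) (hC : 0 < C) (hdis : ∀ y, f y * y ≤ -β * y ^ 2 + C) :
    (∀ w : ℝ → ℝ, ContDiff ℝ 2 w →
      (∀ y, a y * deriv (deriv w) y + f y * deriv w y = 0) →
      (∃ K : ℝ, ∃ m : ℕ, ∀ y, |w y| ≤ K * (1 + |y| ^ m)) →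
      ∃ c : ℝ, ∀ y, w y = c) ∧
    (∀ h : ℝ → ℝ, Continuous h →
      (∃ K : ℝ, ∃ m : ℕ, ∀ y, |h y| ≤ K * (1 + |y| ^ m)) →
      ∀ v₁ v₂ : ℝ → ℝ, ContDiff ℝ 2 v₁ → ContDiff ℝ 2 v₂ →
        (∃ K : ℝ, ∃ m : ℕ, ∀ y, |v₁ y| ≤ K * (1 + |y| ^ m)) →
        (∃ K : ℝ, ∃ m : ℕ, ∀ y, |v₂ y| ≤ K * (1 + |y| ^ m)) →
        (∀ y, a y * deriv (deriv v₁) y + f y * deriv v₁ y = h y - hbar a f h) →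
        (∀ y, a y * deriv (deriv v₂) y + f y * deriv v₂ y = h y - hbar a f h) →
        (∃ c : ℝ, ∀ y, v₁ y - v₂ y = c) ∧
          ((∫ y, v₁ y * piDen a f y) = 0 → (∫ y, v₂ y * piDen a f y) = 0 → v₁ = v₂)) :=
  one_dim_liouville_and_uniqueness_general a f lm lp β C hac hfc hlm hbnd hβ hdis

end
end
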